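/- For a density matrix ρ (positive semidefinite, trace 1) and a Hermitian unitary P (P² = I), the Frobenius norm of the commutator satisfies ‖ρP − Pρ‖₂ ≤ √2. -/

import Mathlib

/-!
Expanding the square and using `P² = 1` gives
`‖ρP − Pρ‖₂² = 2 Tr ρ² − 2 Tr (ρ · PρP)`.
The cross term is nonnegative because it is the trace of a product of two positive semidefinite
matrices, and `Tr ρ² = ∑ λᵢ² ≤ (∑ λᵢ)² = 1` since the eigenvalues of `ρ` are nonnegative.
-/

open Matrix ComplexOrder

/-- Frobenius norm of a complex square matrix: `‖A‖₂ = √(Tr(AᴴA))`. -/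
noncomputable def frobNormC {n : Type*} [Fintype n] (A : Matrix n n ℂ) : ℝ :=
  Real.sqrt ((Aᴴ * A).trace.re)

namespace Matrix

variable {n : Type*} [Fintype n]

theorem trace_conjTranspose_commutator_mul_self {R : Type*} [CommRing R] [StarRing R]
    [DecidableEq n] {A P : Matrix n n R} (hA : A.IsHermitian) (hP : P.IsHermitian)
    (hP2 : P * P = 1) :
    ((A * P - P * A)ᴴ * (A * P - P * A)).trace =
      2 * (A * A).trace - 2 * (A * P * (A * P)).trace := by
  have hPAAP : (P * A * (A * P)).trace = (A * A).trace := by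
    rw [trace_mul_comm, mul_assoc, ← mul_assoc P P, hP2, one_mul]
  have hAPPA : (A * P * (P * A)).trace = (A * A).trace := by
    rw [mul_assoc, ← mul_assoc P P, hP2, one_mul]
  have hPAPA : (P * A * (P * A)).trace = (A * P * (A * P)).trace := by
    rw [mul_assoc, trace_mul_comm]
    simp only [mul_assoc]
  simp only [conjTranspose_sub, conjTranspose_mul, hA.eq, hP.eq, sub_mul, mul_sub, trace_sub,
    hPAAP, hAPPA, hPAPA]
  ring

variable {𝕜 : Type*} [RCLike 𝕜]

theorem PosSemidef.trace_mul_nonneg {A B : Matrix n n 𝕜} (hA : A.PosSemidef)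
    (hB : B.PosSemidef) : 0 ≤ (A * B).trace := by
  classical
  open scoped MatrixOrder in
  obtain ⟨S, rfl⟩ := CStarAlgebra.nonneg_iff_eq_star_mul_self.mp hA.nonneg
  rw [star_eq_conjTranspose, mul_assoc, trace_mul_comm]
  simpa only [mul_assoc] using (hB.mul_mul_conjTranspose_same S).trace_nonneg

theorem IsHermitian.trace_mul_self_eq_sum_sq_eigenvalues [DecidableEq n] {A : Matrix n n 𝕜}
    (hA : A.IsHermitian) : (A * A).trace = ∑ i, (hA.eigenvalues i : 𝕜) ^ 2 := by
  conv_lhs => rw [hA.spectral_theorem, ← map_mul, Unitary.conjStarAlgAut_apply, trace_mul_cycle,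
    Unitary.coe_star_mul_self, one_mul, diagonal_mul_diagonal, trace_diagonal]
  simp [sq]

theorem PosSemidef.trace_mul_self_le_sq_trace {A : Matrix n n 𝕜} (hA : A.PosSemidef) :
    (A * A).trace ≤ A.trace ^ 2 := by
  classical
  rw [hA.isHermitian.trace_mul_self_eq_sum_sq_eigenvalues, hA.isHermitian.trace_eq_sum_eigenvalues]
  norm_cast
  exact RCLike.ofReal_le_ofReal.mpr
    (Finset.sum_sq_le_sq_sum_of_nonneg fun i _ ↦ hA.eigenvalues_nonneg i)

end Matrix

/-- For a density matrix ρ and a Hermitian unitary P (P² = I), the Frobenius norm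
of the commutator satisfies ‖ρP − Pρ‖₂ ≤ √2. -/
theorem commutator_frobenius_le_sqrt_two {n : ℕ}
    (ρ P : Matrix (Fin n) (Fin n) ℂ)
    (hρ : ρ.PosSemidef) (hρtr : ρ.trace = 1)
    (hP : P.IsHermitian) (hP2 : P * P = 1) :
    frobNormC (ρ * P - P * ρ) ≤ Real.sqrt 2 := by
  have hρ_sq : (ρ * ρ).trace ≤ 1 := by
    simpa [hρtr] using hρ.trace_mul_self_le_sq_trace
  have hcross : 0 ≤ (ρ * P * (ρ * P)).trace := by
    have hPρP : (P * ρ * P).PosSemidef := by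
      simpa [hP.eq] using hρ.conjTranspose_mul_mul_same P
    simpa only [mul_assoc] using hρ.trace_mul_nonneg hPρP
  have hle : ((ρ * P - P * ρ)ᴴ * (ρ * P - P * ρ)).trace ≤ 2 := by
    rw [trace_conjTranspose_commutator_mul_self hρ.isHermitian hP hP2]
    calc 2 * (ρ * ρ).trace - 2 * (ρ * P * (ρ * P)).trace ≤ 2 * 1 - 2 * 0 := by gcongr
      _ = 2 := by ring
  exact Real.sqrt_le_sqrt (by simpa using (Complex.le_def.mp hle).1)
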